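/- Let ω > 0, C > 0 and M ≥ 0. There exists N₁ = N₁(C, ω, M) > 0 such that for every x, e ∈ ℝ³ with ‖e‖ ≤ M and d_r(x) > N₁, setting v = F_ω(x) + e and t₀ = C/√(d_r(x)), the following three statements hold: (i) D_{x,v}^ω(t₀) ≤ ω² C²; (ii) d_r(x + t₀ v) − d_r(x) ≥ ω² C²/6; and (iii) for every t ≥ t₀, d_r(x + t v) − d_r(x) ≥ ω² C²/6. -/

import Mathlib

/-!
Write `r = dr x` and `v = F_ω x + e`. Since `F_ω` is linear, the velocity of the particle
relative to the medium at time `s` is `e - s • F_ω v`, so the travelled distance up to time `t`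
is at most `‖e‖ t + ω ‖v‖ t² / 2` with `‖v‖ ≤ ω r + M`; at `t₀ = C / √r` this is
`ω² C² / 2 + O(r^{-1/2})`.

In the horizontal plane the medium velocity `ω J p` (`J` the rotation by a right angle) is
orthogonal to the position `p`, so Cauchy–Schwarz on the cross terms gives
`|p + t (ω J p + q)|² ≥ r² (1 + ω² t²) - 2 t (1 + ω t) M r`. For `t ≥ t₀` the rotational gain
`ω² t² r² ≥ ω² C² r` beats `(r + ω² C² / 6)² - r²` plus the error terms
as soon as `√r ≥ ω C` and `√r ≥ 24 M / (ω² C)`.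
-/

noncomputable def vec3 (a b c : ℝ) : EuclideanSpace ℝ (Fin 3) := WithLp.toLp 2 ![a, b, c]

noncomputable def Frot (ω : ℝ) (y : EuclideanSpace ℝ (Fin 3)) : EuclideanSpace ℝ (Fin 3) :=
  vec3 (-ω * y 1) (ω * y 0) 0

noncomputable def dr (x : EuclideanSpace ℝ (Fin 3)) : ℝ :=
  Real.sqrt (x 0 ^ 2 + x 1 ^ 2)

noncomputable def Dtrav (ω : ℝ) (x v : EuclideanSpace ℝ (Fin 3)) (t : ℝ) : ℝ :=
  ∫ s in (0 : ℝ)..t, ‖v - Frot ω (x + s • v)‖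

local notation "ℝ³" => EuclideanSpace ℝ (Fin 3)

lemma Frot_add_smul (ω s : ℝ) (x v : ℝ³) :
    Frot ω (x + s • v) = Frot ω x + s • Frot ω v := by
  ext i
  fin_cases i <;> simp [Frot, vec3] <;> ring

lemma dr_nonneg (y : ℝ³) : 0 ≤ dr y :=
  Real.sqrt_nonneg _

lemma dr_sq (y : ℝ³) : dr y ^ 2 = y 0 ^ 2 + y 1 ^ 2 :=
  Real.sq_sqrt (by positivity)

lemma dr_le_norm (y : ℝ³) : dr y ≤ ‖y‖ := by
  rw [EuclideanSpace.norm_eq, Fin.sum_univ_three]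
  refine Real.sqrt_le_sqrt ?_
  simp only [Real.norm_eq_abs, sq_abs]
  linarith [sq_nonneg (y 2)]

lemma norm_Frot (ω : ℝ) (y : ℝ³) : ‖Frot ω y‖ = |ω| * dr y := by
  rw [EuclideanSpace.norm_eq, dr, Fin.sum_univ_three, ← Real.sqrt_sq_eq_abs,
    ← Real.sqrt_mul (sq_nonneg ω)]
  congr 1
  simp only [Frot, vec3, Matrix.cons_val_zero, Matrix.cons_val_one, Matrix.cons_val, norm_mul,
    norm_neg, norm_zero, Real.norm_eq_abs, mul_pow, sq_abs]
  ring

lemma Dtrav_le (ω : ℝ) (x e : ℝ³) {t : ℝ} (ht : 0 ≤ t) :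
    Dtrav ω x (Frot ω x + e) t ≤ ‖e‖ * t + |ω| * (|ω| * dr x + ‖e‖) * (t ^ 2 / 2) := by
  set v := Frot ω x + e
  have hv : ‖v‖ ≤ |ω| * dr x + ‖e‖ := (norm_add_le _ _).trans_eq (by rw [norm_Frot])
  have hFv : ‖Frot ω v‖ ≤ |ω| * (|ω| * dr x + ‖e‖) := by
    rw [norm_Frot]; exact mul_le_mul_of_nonneg_left ((dr_le_norm v).trans hv) (abs_nonneg ω)
  have relative : ∀ s : ℝ, v - Frot ω (x + s • v) = e - s • Frot ω v := fun s => by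
    rw [Frot_add_smul, add_sub_add_left_eq_sub]
  calc Dtrav ω x v t = ∫ s in (0 : ℝ)..t, ‖e - s • Frot ω v‖ := by simp only [Dtrav, relative]
    _ ≤ ∫ s in (0 : ℝ)..t, (‖e‖ + |ω| * (|ω| * dr x + ‖e‖) * s) := by
      refine intervalIntegral.integral_mono_on ht (Continuous.intervalIntegrable (by fun_prop) _ _)
        (Continuous.intervalIntegrable (by fun_prop) _ _) fun s hs => ?_
      calc ‖e - s • Frot ω v‖ ≤ ‖e‖ + ‖s • Frot ω v‖ := norm_sub_le _ _
        _ = ‖e‖ + s * ‖Frot ω v‖ := by rw [norm_smul, Real.norm_of_nonneg hs.1]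
        _ ≤ ‖e‖ + |ω| * (|ω| * dr x + ‖e‖) * s := by nlinarith [hs.1]
    _ = ‖e‖ * t + |ω| * (|ω| * dr x + ‖e‖) * (t ^ 2 / 2) := by
      rw [intervalIntegral.integral_add intervalIntegrable_const
        (intervalIntegral.intervalIntegrable_id.const_mul _), intervalIntegral.integral_const_mul]
      simp only [intervalIntegral.integral_const, integral_id, smul_eq_mul]
      ring

lemma abs_mul_add_mul_le (a b f g : ℝ) :
    |a * f + b * g| ≤ √(a ^ 2 + b ^ 2) * √(f ^ 2 + g ^ 2) := by
  rw [← Real.sqrt_mul (by positivity)]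
  exact Real.abs_le_sqrt (by nlinarith [sq_nonneg (a * g - b * f)])

lemma sq_dr_add_smul_ge (ω t : ℝ) (ht : 0 ≤ t) (x e : ℝ³) :
    dr x ^ 2 * (1 + (ω * t) ^ 2) - 2 * t * (1 + |ω| * t) * dr e * dr x
      ≤ dr (x + t • (Frot ω x + e)) ^ 2 := by
  have radial : |x 0 * e 0 + x 1 * e 1| ≤ dr x * dr e := abs_mul_add_mul_le _ _ _ _
  have tangential : |x 0 * e 1 - x 1 * e 0| ≤ dr x * dr e := by
    have := abs_mul_add_mul_le (x 0) (x 1) (e 1) (-e 0)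
    rwa [neg_sq, add_comm (e 1 ^ 2), mul_neg, ← sub_eq_add_neg] at this
  have h1 := (neg_le_neg radial).trans (neg_abs_le _)
  have h2 : -(|ω| * (dr x * dr e)) ≤ ω * (x 0 * e 1 - x 1 * e 0) :=
    (neg_le_neg (by rw [abs_mul]; exact mul_le_mul_of_nonneg_left tangential (abs_nonneg ω))).trans
      (neg_abs_le _)
  simp only [dr_sq, Frot, vec3, PiLp.add_apply, PiLp.smul_apply, Matrix.cons_val_zero,
    Matrix.cons_val_one, smul_eq_mul]
  nlinarith [mul_le_mul_of_nonneg_left h1 (by positivity : 0 ≤ 2 * t),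
    mul_le_mul_of_nonneg_left h2 (by positivity : 0 ≤ 2 * t ^ 2),
    mul_nonneg (sq_nonneg t) (add_nonneg (sq_nonneg (e 0)) (sq_nonneg (e 1)))]

section FarFromAxis

variable {ω C M u : ℝ}

lemma radial_gain_arith (hω : 0 < ω) (hC : 0 < C) (hu : ω * C ≤ u)
    (hMu : 24 * M ≤ ω ^ 2 * C * u) {t : ℝ} (ht : C / u ≤ t) :
    (u ^ 2 + ω ^ 2 * C ^ 2 / 6) ^ 2
      ≤ u ^ 4 * (1 + (ω * t) ^ 2) - 2 * t * (1 + ω * t) * M * u ^ 2 := by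
  have hu0 : 0 < u := (by positivity : 0 < ω * C).trans_le hu
  have ht0 : 0 ≤ t := (by positivity : 0 ≤ C / u).trans ht
  have hMu' : 4 * M ≤ ω * u ^ 2 := by
    nlinarith [mul_le_mul_of_nonneg_left hu (by positivity : 0 ≤ ω * u)]
  have hk : 2 * M * u ^ 2 ≤ C / u * (ω ^ 2 * u ^ 4 / 2) := by
    have : C / u * (ω ^ 2 * u ^ 4 / 2) = ω ^ 2 * C * u * u ^ 2 / 2 := by field_simp
    nlinarith [mul_le_mul_of_nonneg_right hMu (sq_nonneg u),
      (by positivity : 0 ≤ ω ^ 2 * C * u * u ^ 2)]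
  -- `t ↦ t (t ω² u⁴ / 2 - 2 M u²)` increases on `[C / u, ∞)`, where both factors are `≥ 0`.
  have mono : C / u * (C / u * (ω ^ 2 * u ^ 4 / 2) - 2 * M * u ^ 2)
      ≤ t * (t * (ω ^ 2 * u ^ 4 / 2) - 2 * M * u ^ 2) :=
    mul_le_mul ht (sub_le_sub_right (mul_le_mul_of_nonneg_right ht (by positivity)) _)
      (by linarith) ht0
  have at_t₀ : C / u * (C / u * (ω ^ 2 * u ^ 4 / 2) - 2 * M * u ^ 2)
      = ω ^ 2 * C ^ 2 * u ^ 2 / 2 - 2 * M * C * u := by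
    field_simp
  have drift : 2 * M * C * u ≤ ω ^ 2 * C ^ 2 * u ^ 2 / 12 := by
    nlinarith [mul_le_mul_of_nonneg_right hMu (by positivity : 0 ≤ C * u)]
  have hωC : ω ^ 4 * C ^ 4 ≤ ω ^ 2 * C ^ 2 * u ^ 2 := by
    nlinarith [mul_le_mul hu hu (by positivity) hu0.le, (by positivity : 0 ≤ ω ^ 2 * C ^ 2)]
  have hrot : 2 * ω * M * u ^ 2 * t ^ 2 ≤ ω ^ 2 * u ^ 4 / 2 * t ^ 2 := by
    nlinarith [mul_le_mul_of_nonneg_right hMu' (by positivity : 0 ≤ ω * u ^ 2 * t ^ 2)]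
  calc (u ^ 2 + ω ^ 2 * C ^ 2 / 6) ^ 2
      = u ^ 4 + ω ^ 2 * C ^ 2 * u ^ 2 / 3 + ω ^ 4 * C ^ 4 / 36 := by ring
    _ ≤ u ^ 4 + C / u * (C / u * (ω ^ 2 * u ^ 4 / 2) - 2 * M * u ^ 2) := by
      rw [at_t₀]; linarith [(by positivity : 0 ≤ ω ^ 2 * C ^ 2 * u ^ 2)]
    _ ≤ u ^ 4 + t * (t * (ω ^ 2 * u ^ 4 / 2) - 2 * M * u ^ 2) := by linarith
    _ ≤ u ^ 4 * (1 + (ω * t) ^ 2) - 2 * t * (1 + ω * t) * M * u ^ 2 := by linarith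

lemma travel_arith (hω : 0 < ω) (hC : 0 < C) (hu : ω * C ≤ u)
    (hMu : 24 * M ≤ ω ^ 2 * C * u) :
    M * (C / u) + ω * (ω * u ^ 2 + M) * ((C / u) ^ 2 / 2) ≤ ω ^ 2 * C ^ 2 := by
  have hu0 : 0 < u := (by positivity : 0 < ω * C).trans_le hu
  have expand : M * (C / u) + ω * (ω * u ^ 2 + M) * ((C / u) ^ 2 / 2)
      = ω ^ 2 * C ^ 2 / 2 + M * C / u + ω * M * C ^ 2 / (2 * u ^ 2) := by
    field_simp; ring
  have h1 : M * C / u ≤ ω ^ 2 * C ^ 2 / 24 := by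
    rw [div_le_iff₀ hu0]; nlinarith [mul_le_mul_of_nonneg_left hMu hC.le]
  have h2 : ω * M * C ^ 2 / (2 * u ^ 2) ≤ ω ^ 2 * C ^ 2 / 48 := by
    rw [div_le_iff₀ (by positivity)]
    nlinarith [mul_le_mul_of_nonneg_left hMu (by positivity : 0 ≤ ω * C ^ 2),
      mul_le_mul_of_nonneg_left hu (by positivity : 0 ≤ ω ^ 2 * C ^ 2 * u)]
  rw [expand]
  linarith [(by positivity : 0 < ω ^ 2 * C ^ 2)]

lemma Dtrav_le_of_far (hω : 0 < ω) (hC : 0 < C) (hu : ω * C ≤ u)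
    (hMu : 24 * M ≤ ω ^ 2 * C * u) {x e : ℝ³} (he : ‖e‖ ≤ M) (hx : dr x = u ^ 2) :
    Dtrav ω x (Frot ω x + e) (C / u) ≤ ω ^ 2 * C ^ 2 := by
  have hu0 : 0 < u := (by positivity : 0 < ω * C).trans_le hu
  calc Dtrav ω x (Frot ω x + e) (C / u)
      ≤ ‖e‖ * (C / u) + |ω| * (|ω| * dr x + ‖e‖) * ((C / u) ^ 2 / 2) :=
        Dtrav_le ω x e (by positivity)
    _ ≤ M * (C / u) + ω * (ω * u ^ 2 + M) * ((C / u) ^ 2 / 2) := by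
        rw [abs_of_pos hω, hx]; gcongr
    _ ≤ ω ^ 2 * C ^ 2 := travel_arith hω hC hu hMu

lemma le_dr_add_smul_of_far (hω : 0 < ω) (hC : 0 < C) (hu : ω * C ≤ u)
    (hMu : 24 * M ≤ ω ^ 2 * C * u) {x e : ℝ³} (he : ‖e‖ ≤ M) (hx : dr x = u ^ 2)
    {t : ℝ} (ht : C / u ≤ t) :
    dr x + ω ^ 2 * C ^ 2 / 6 ≤ dr (x + t • (Frot ω x + e)) := by
  have hu0 : 0 < u := (by positivity : 0 < ω * C).trans_le hu
  have ht0 : 0 ≤ t := (by positivity : 0 ≤ C / u).trans ht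
  have hem : dr e ≤ M := (dr_le_norm e).trans he
  rw [hx, ← pow_le_pow_iff_left₀ (by positivity) (dr_nonneg _) two_ne_zero]
  calc (u ^ 2 + ω ^ 2 * C ^ 2 / 6) ^ 2
      ≤ u ^ 4 * (1 + (ω * t) ^ 2) - 2 * t * (1 + ω * t) * M * u ^ 2 :=
        radial_gain_arith hω hC hu hMu ht
    _ ≤ dr x ^ 2 * (1 + (ω * t) ^ 2) - 2 * t * (1 + |ω| * t) * dr e * dr x := by
        rw [abs_of_pos hω, hx, ← pow_mul]; gcongr
    _ ≤ dr (x + t • (Frot ω x + e)) ^ 2 := sq_dr_add_smul_ge ω t ht0 x e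

end FarFromAxis

theorem stmt_4 (ω C M : ℝ) (hω : 0 < ω) (hC : 0 < C) (hM : 0 ≤ M) :
    ∃ N₁ : ℝ, 0 < N₁ ∧
      ∀ x e : EuclideanSpace ℝ (Fin 3), ‖e‖ ≤ M → dr x > N₁ →
        Dtrav ω x (Frot ω x + e) (C / Real.sqrt (dr x)) ≤ ω ^ 2 * C ^ 2 ∧
        dr (x + (C / Real.sqrt (dr x)) • (Frot ω x + e)) - dr x ≥ ω ^ 2 * C ^ 2 / 6 ∧
        ∀ t : ℝ, t ≥ C / Real.sqrt (dr x) →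
          dr (x + t • (Frot ω x + e)) - dr x ≥ ω ^ 2 * C ^ 2 / 6 := by
  refine ⟨(ω * C + 24 * M / (ω ^ 2 * C)) ^ 2, by positivity, fun x e he hx => ?_⟩
  set u := √(dr x)
  have hu : ω * C + 24 * M / (ω ^ 2 * C) < u := (Real.lt_sqrt (by positivity)).2 hx
  have hxu : dr x = u ^ 2 := (Real.sq_sqrt (dr_nonneg x)).symm
  have huC : ω * C ≤ u := by linarith [(by positivity : 0 ≤ 24 * M / (ω ^ 2 * C))]
  have hMu : 24 * M ≤ ω ^ 2 * C * u := by
    rw [mul_comm (ω ^ 2 * C), ← div_le_iff₀ (by positivity)]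
    linarith [(by positivity : 0 ≤ ω * C)]
  have gain := fun {t} (ht : C / u ≤ t) => le_dr_add_smul_of_far hω hC huC hMu he hxu ht
  exact ⟨Dtrav_le_of_far hω hC huC hMu he hxu, by linarith [gain le_rfl],
    fun t ht => by linarith [gain ht]⟩
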